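/- Local error growth bound for asynchronous local updates: Assume ητ ≤ 1/2. For any given δ ∈ (0,1), with probability at least 1-δ, simultaneously for all agents k ∈ {1,…,K} and all 0 ≤ u < T, ‖Δ_u^k‖_∞ ≤ ‖Δ_{ι(u)}^k‖_∞ + (2γ/(1-γ)) · sqrt(η · log(|S||A|TK/δ)), where Δ_v^k = Q* − Q_v^k and ι(u) = τ⌊u/τ⌋ is the most recent synchronization step until u. -/

import Mathlib

/-!
Between two synchronizations an agent runs plain asynchronous Q-learning along its own Markov
chain. Unrolling the update at a pair `sa`, the error `Q* - Q` after the `j`-th local visit of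
`sa` is at most `(1 - η)^j` times the error at the last synchronization, plus
`(1 - (1 - η)^j) γ` times the sup error of the bootstrapped values, plus `γη` times a sum of the
increments `P V*(s, a) - V*(s')` weighted by `(1 - η)^(j-1-i)`. As `ητ ≤ 1/2`, the factor
`1 - (1 - η)^j` is at most `1/2`, so an induction along the block keeps the error within the
bound as long as every weighted sum is at most half the slack. These sums are predictable sums of
mean-zero increments of range `1/(1-γ)` with quadratic variation at most `1/η`; an
Azuma–Hoeffding bound, proved on the path weights of the chain with Hoeffding's lemma for each
transition, and a union bound over agents, blocks, pairs and visit counts give probability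
`1 - δ`.
-/

open MeasureTheory ProbabilityTheory

/-- Maximum of a real-valued function over a finite (action) type. -/
noncomputable def vmax {A : Type*} [Fintype A] (f : A → ℝ) : ℝ := ⨆ a, f a

/-- Sup norm of a real-valued function over a finite index type. -/
noncomputable def supNorm {ι : Type*} (f : ι → ℝ) : ℝ := ⨆ i, |f i|

open Finset Real

section SupNorm

variable {ι : Type*}

lemma abs_le_supNorm [Finite ι] (f : ι → ℝ) (i : ι) : |f i| ≤ supNorm f :=
  le_ciSup (f := fun j => |f j|) (Set.finite_range _).bddAbove i

lemma supNorm_le [Nonempty ι] {f : ι → ℝ} {c : ℝ} (h : ∀ i, |f i| ≤ c) : supNorm f ≤ c :=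
  ciSup_le h

lemma supNorm_nonneg (f : ι → ℝ) : 0 ≤ supNorm f :=
  Real.iSup_nonneg fun _ => abs_nonneg _

variable [Fintype ι]

lemma le_vmax (f : ι → ℝ) (i : ι) : f i ≤ vmax f :=
  le_ciSup (Set.finite_range _).bddAbove i

lemma vmax_le [Nonempty ι] {f : ι → ℝ} {c : ℝ} (h : ∀ i, f i ≤ c) : vmax f ≤ c :=
  ciSup_le h

lemma abs_vmax_sub_vmax_le [Nonempty ι] {f g : ι → ℝ} {c : ℝ} (h : ∀ i, |f i - g i| ≤ c) :
    |vmax f - vmax g| ≤ c := by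
  rw [abs_sub_le_iff, sub_le_iff_le_add, sub_le_iff_le_add]
  constructor
  · exact vmax_le fun i => by linarith [le_vmax g i, (abs_le.mp (h i)).2]
  · exact vmax_le fun i => by linarith [le_vmax f i, (abs_le.mp (h i)).1]

end SupNorm

lemma sum_mul_exp_mul_le_of_mem_Icc {ι : Type*} [Fintype ι] {q f : ι → ℝ} {a b : ℝ}
    (hq0 : ∀ i, 0 ≤ q i) (hq1 : ∑ i, q i = 1) (hf : ∀ i, f i ∈ Set.Icc a b)
    (hmean : ∑ i, q i * f i = 0) (θ : ℝ) :
    ∑ i, q i * exp (θ * f i) ≤ exp ((b - a) ^ 2 * θ ^ 2 / 8) := by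
  let _ : MeasurableSpace ι := ⊤
  let p : PMF ι := PMF.ofFintype (fun i => ENNReal.ofReal (q i)) (by
    rw [← ENNReal.ofReal_sum_of_nonneg fun i _ => hq0 i, hq1, ENNReal.ofReal_one])
  have hp : ∀ i, (p i).toReal = q i := fun i => ENNReal.toReal_ofReal (hq0 i)
  have h := (hasSubgaussianMGF_of_mem_Icc_of_integral_eq_zero (μ := p.toMeasure) (X := f)
    Measurable.of_discrete.aemeasurable (ae_of_all _ hf)
    (by simpa [PMF.integral_eq_sum, hp] using hmean)).mgf_le θ
  simp only [mgf, PMF.integral_eq_sum, hp, smul_eq_mul] at h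
  convert h using 2
  simp only [NNReal.coe_pow, NNReal.coe_div, coe_nnnorm, Real.norm_eq_abs, NNReal.coe_ofNat,
    div_pow, sq_abs]
  ring

section PathSums

variable {β : Type*} (κ : β → β → ℝ) (p0 : β → ℝ)

def DependsOnPrefix {α : Type*} (n : ℕ) (F : (ℕ → β) → α) : Prop :=
  ∀ x x', (∀ i ≤ n, x i = x' i) → F x = F x'

def pathExt (n : ℕ) (y : Fin (n + 1) → β) : ℕ → β := fun i => y ⟨min i n, by omega⟩

def pathWeight (n : ℕ) (x : ℕ → β) : ℝ := p0 (x 0) * ∏ i ∈ range n, κ (x i) (x (i + 1))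

variable {κ p0}

lemma pathExt_of_le {n i : ℕ} (y : Fin (n + 1) → β) (h : i ≤ n) :
    pathExt n y i = y ⟨i, by omega⟩ := by
  simp [pathExt, Nat.min_eq_left h]

lemma pathExt_snoc_of_le {n i : ℕ} (z : Fin (n + 1) → β) (b : β) (h : i ≤ n) :
    pathExt (n + 1) (Fin.snoc z b) i = pathExt n z i := by
  rw [pathExt_of_le _ (by omega), pathExt_of_le _ h]
  exact Fin.snoc_castSucc (α := fun _ => β) b z ⟨i, by omega⟩

lemma pathExt_snoc_self (n : ℕ) (z : Fin (n + 1) → β) (b : β) :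
    pathExt (n + 1) (Fin.snoc z b) (n + 1) = b := by
  rw [pathExt_of_le _ le_rfl]
  exact Fin.snoc_last (α := fun _ => β) b z

lemma pathWeight_nonneg (hκ0 : ∀ y b, 0 ≤ κ y b) (hp0 : ∀ s, 0 ≤ p0 s) (n : ℕ) (x : ℕ → β) :
    0 ≤ pathWeight κ p0 n x :=
  mul_nonneg (hp0 _) (prod_nonneg fun _ _ => hκ0 _ _)

lemma pathWeight_snoc (n : ℕ) (z : Fin (n + 1) → β) (b : β) :
    pathWeight κ p0 (n + 1) (pathExt (n + 1) (Fin.snoc z b))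
      = pathWeight κ p0 n (pathExt n z) * κ (pathExt n z n) b := by
  have hz : ∀ i ≤ n, pathExt (n + 1) (Fin.snoc z b) i = pathExt n z i :=
    fun i hi => pathExt_snoc_of_le z b hi
  simp only [pathWeight, prod_range_succ, pathExt_snoc_self, hz 0 (Nat.zero_le _), hz n le_rfl]
  rw [prod_congr rfl fun i hi => by
    rw [hz i (mem_range.mp hi).le, hz (i + 1) (mem_range.mp hi)]]
  ring

lemma sum_pathWeight_succ_mul [Fintype β] (n : ℕ) (F : (ℕ → β) → ℝ) :
    ∑ y : Fin (n + 2) → β, pathWeight κ p0 (n + 1) (pathExt (n + 1) y) * F (pathExt (n + 1) y)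
      = ∑ z : Fin (n + 1) → β, pathWeight κ p0 n (pathExt n z)
          * ∑ b, κ (pathExt n z n) b * F (pathExt (n + 1) (Fin.snoc z b)) := by
  rw [← Fintype.sum_equiv (Fin.snocEquiv fun _ => β) (fun p => _ * F (pathExt (n + 1)
    (Fin.snoc p.2 p.1))) _ fun _ => rfl, Fintype.sum_prod_type, sum_comm]
  refine sum_congr rfl fun z _ => ?_
  simp only [Fin.snocEquiv, Equiv.coe_fn_mk, pathWeight_snoc, mul_sum]
  exact sum_congr rfl fun b _ => by ring

lemma sum_pathWeight [Fintype β] (hκ1 : ∀ y, ∑ b, κ y b = 1) (hp1 : ∑ s, p0 s = 1) (n : ℕ) :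
    ∑ y : Fin (n + 1) → β, pathWeight κ p0 n (pathExt n y) = 1 := by
  induction n with
  | zero =>
    rw [← hp1]
    exact Fintype.sum_equiv (Equiv.funUnique (Fin 1) β) _ _ fun y => by
      simp [pathWeight, pathExt, Equiv.funUnique]
  | succ n ih => simpa [hκ1, ih] using sum_pathWeight_succ_mul (κ := κ) (p0 := p0) n fun _ => 1

end PathSums

section WeightedNoise

variable {β : Type*} {κ : β → β → ℝ} {p0 : β → ℝ}

def weightedNoise (w : ℕ → (ℕ → β) → ℝ) (Z : β → β → ℝ) (ι n : ℕ) (x : ℕ → β) : ℝ :=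
  ∑ e ∈ range n, w e x * Z (x (ι + e)) (x (ι + e + 1))

variable {w : ℕ → (ℕ → β) → ℝ} {Z : β → β → ℝ} {ι : ℕ}

lemma weightedNoise_neg (n : ℕ) (x : ℕ → β) :
    weightedNoise (fun e x => -w e x) Z ι n x = -weightedNoise w Z ι n x := by
  simp [weightedNoise]

lemma weightedNoise_dependsOnPrefix (hw : ∀ e, DependsOnPrefix (ι + e) (w e)) (n : ℕ) :
    DependsOnPrefix (ι + n) (weightedNoise w Z ι n) := fun x x' h =>
  sum_congr rfl fun e he => by
    have he := mem_range.mp he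
    rw [hw e x x' fun i hi => h i (by omega), h _ (by omega), h _ (by omega)]

lemma weightedNoise_succ_of_agree (hw : ∀ e, DependsOnPrefix (ι + e) (w e)) {d : ℕ}
    {x x' : ℕ → β} (h : ∀ i ≤ ι + d, x' i = x i) :
    weightedNoise w Z ι (d + 1) x'
      = weightedNoise w Z ι d x + w d x * Z (x (ι + d)) (x' (ι + d + 1)) := by
  have hd := weightedNoise_dependsOnPrefix (Z := Z) hw d x' x h
  unfold weightedNoise at hd ⊢
  rw [sum_range_succ, hd, hw d x' x h, h _ le_rfl]

lemma sum_sq_succ_of_agree (hw : ∀ e, DependsOnPrefix (ι + e) (w e)) {d : ℕ}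
    {x x' : ℕ → β} (h : ∀ i ≤ ι + d, x' i = x i) :
    ∑ e ∈ range (d + 1), w e x' ^ 2 = ∑ e ∈ range d, w e x ^ 2 + w d x ^ 2 := by
  rw [sum_range_succ, hw d x' x h]
  congr 1
  exact sum_congr rfl fun e he => by rw [hw e x' x fun i hi => h i (by simp at he; omega)]

variable [Fintype β] {lo : β → ℝ} {B : ℝ}

lemma sum_mul_exp_sub_le_one (hκ0 : ∀ y b, 0 ≤ κ y b) (hκ1 : ∀ y, ∑ b, κ y b = 1)
    (hZ : ∀ y b, Z y b ∈ Set.Icc (lo y) (lo y + B)) (hZm : ∀ y, ∑ b, κ y b * Z y b = 0)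
    (θ : ℝ) (y : β) :
    ∑ b, κ y b * exp (θ * Z y b - θ ^ 2 * B ^ 2 / 8) ≤ 1 := by
  have h := sum_mul_exp_mul_le_of_mem_Icc (hκ0 y) (hκ1 y) (hZ y) (hZm y) θ
  simp only [sub_eq_add_neg, exp_add, ← mul_assoc, ← sum_mul]
  calc (∑ b, κ y b * exp (θ * Z y b)) * exp (-(θ ^ 2 * B ^ 2 / 8))
      ≤ exp ((lo y + B - lo y) ^ 2 * θ ^ 2 / 8) * exp (-(θ ^ 2 * B ^ 2 / 8)) := by gcongr
    _ = 1 := by rw [← exp_add, ← exp_zero]; ring_nf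

/-- `exp (l Gₙ - l² B² Vₙ / 8)` is a supermartingale along the chain: by Hoeffding's lemma each
transition multiplies its conditional mean by at most one. -/
lemma sum_pathWeight_mul_exp_le_one (hκ0 : ∀ y b, 0 ≤ κ y b) (hκ1 : ∀ y, ∑ b, κ y b = 1)
    (hp0 : ∀ s, 0 ≤ p0 s) (hp1 : ∑ s, p0 s = 1) (hw : ∀ e, DependsOnPrefix (ι + e) (w e))
    (hZ : ∀ y b, Z y b ∈ Set.Icc (lo y) (lo y + B)) (hZm : ∀ y, ∑ b, κ y b * Z y b = 0)
    (l : ℝ) (d : ℕ) :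
    ∑ y : Fin (ι + d + 1) → β, pathWeight κ p0 (ι + d) (pathExt (ι + d) y)
      * exp (l * weightedNoise w Z ι d (pathExt (ι + d) y)
        - l ^ 2 * B ^ 2 / 8 * ∑ e ∈ range d, w e (pathExt (ι + d) y) ^ 2) ≤ 1 := by
  induction d with
  | zero => simp [weightedNoise, sum_pathWeight hκ1 hp1]
  | succ d ih =>
    refine (sum_pathWeight_succ_mul (ι + d) fun x => exp (l * weightedNoise w Z ι (d + 1) x
      - l ^ 2 * B ^ 2 / 8 * ∑ e ∈ range (d + 1), w e x ^ 2)).trans_le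
        (le_trans (sum_le_sum fun z _ => ?_) ih)
    refine mul_le_mul_of_nonneg_left ?_ (pathWeight_nonneg hκ0 hp0 _ _)
    set x := pathExt (ι + d) z
    have hx : ∀ b, ∀ i ≤ ι + d, pathExt (ι + d + 1) (Fin.snoc z b) i = x i :=
      fun b i hi => pathExt_snoc_of_le z b hi
    simp only [weightedNoise_succ_of_agree hw (hx _), sum_sq_succ_of_agree hw (hx _),
      pathExt_snoc_self]
    have hsplit : ∀ b, exp (l * (weightedNoise w Z ι d x + w d x * Z (x (ι + d)) b)
        - l ^ 2 * B ^ 2 / 8 * (∑ e ∈ range d, w e x ^ 2 + w d x ^ 2))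
        = exp (l * weightedNoise w Z ι d x - l ^ 2 * B ^ 2 / 8 * ∑ e ∈ range d, w e x ^ 2)
          * exp (l * w d x * Z (x (ι + d)) b - (l * w d x) ^ 2 * B ^ 2 / 8) := by
      intro b; rw [← exp_add]; ring_nf
    simp only [hsplit, mul_left_comm _ (exp _), ← mul_sum]
    exact mul_le_of_le_one_right (exp_pos _).le
      (sum_mul_exp_sub_le_one hκ0 hκ1 hZ hZm (l * w d x) (x (ι + d)))

lemma sum_pathWeight_filter_lt_weightedNoise_le {n : ℕ} {σ2 t : ℝ}
    (hκ0 : ∀ y b, 0 ≤ κ y b) (hκ1 : ∀ y, ∑ b, κ y b = 1) (hp0 : ∀ s, 0 ≤ p0 s)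
    (hp1 : ∑ s, p0 s = 1) (hw : ∀ e, DependsOnPrefix (ι + e) (w e))
    (hwσ : ∀ x, ∑ e ∈ range n, w e x ^ 2 ≤ σ2) (hZ : ∀ y b, Z y b ∈ Set.Icc (lo y) (lo y + B))
    (hZm : ∀ y, ∑ b, κ y b * Z y b = 0) (hB : 0 < B) (hσ2 : 0 < σ2) (ht : 0 ≤ t) :
    ∑ y : Fin (ι + n + 1) → β with t < weightedNoise w Z ι n (pathExt (ι + n) y),
      pathWeight κ p0 (ι + n) (pathExt (ι + n) y) ≤ exp (-2 * t ^ 2 / (B ^ 2 * σ2)) := by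
  set l := 4 * t / (B ^ 2 * σ2)
  have hl : 0 ≤ l := by positivity
  have hexp : l ^ 2 * B ^ 2 / 8 * σ2 - l * t = -2 * t ^ 2 / (B ^ 2 * σ2) := by
    simp only [l]
    field_simp
    ring
  set W := fun y : Fin (ι + n + 1) → β => pathWeight κ p0 (ι + n) (pathExt (ι + n) y)
  set M := fun y : Fin (ι + n + 1) → β => exp (l * weightedNoise w Z ι n (pathExt (ι + n) y)
    - l ^ 2 * B ^ 2 / 8 * ∑ e ∈ range n, w e (pathExt (ι + n) y) ^ 2)
  have hW : ∀ y, 0 ≤ W y := fun y => pathWeight_nonneg hκ0 hp0 _ _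
  calc ∑ y with t < weightedNoise w Z ι n (pathExt (ι + n) y), W y
      ≤ ∑ y with t < weightedNoise w Z ι n (pathExt (ι + n) y),
          W y * M y * exp (l ^ 2 * B ^ 2 / 8 * σ2 - l * t) := by
        refine sum_le_sum fun y hy => ?_
        rw [mul_assoc, ← exp_add]
        refine le_mul_of_one_le_right (hW y) (one_le_exp ?_)
        have hG := mul_le_mul_of_nonneg_left (mem_filter.mp hy).2.le hl
        have hV := mul_le_mul_of_nonneg_left (hwσ (pathExt (ι + n) y))
          (by positivity : 0 ≤ l ^ 2 * B ^ 2 / 8)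
        linarith
    _ ≤ ∑ y, W y * M y * exp (l ^ 2 * B ^ 2 / 8 * σ2 - l * t) :=
        sum_le_sum_of_subset_of_nonneg (filter_subset _ _) fun y _ _ =>
          mul_nonneg (mul_nonneg (hW y) (exp_pos _).le) (exp_pos _).le
    _ ≤ 1 * exp (l ^ 2 * B ^ 2 / 8 * σ2 - l * t) := by
        rw [← sum_mul]
        gcongr
        exact sum_pathWeight_mul_exp_le_one hκ0 hκ1 hp0 hp1 hw hZ hZm l n
    _ = exp (-2 * t ^ 2 / (B ^ 2 * σ2)) := by rw [one_mul, hexp]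

end WeightedNoise

section MarkovChain

variable {Ω : Type*} [MeasurableSpace Ω] (Pr : Measure Ω) {β : Type*} [Fintype β]
  [MeasurableSpace β] [MeasurableSingletonClass β] {X : ℕ → Ω → β} {κ : β → β → ℝ}

lemma measure_setOf_dependsOnPrefix [IsFiniteMeasure Pr] (hX : ∀ t, Measurable (X t))
    (hlaw : ∀ (n : ℕ) (x : ℕ → β), Pr {ω | ∀ i ≤ n, X i ω = x i}
      = Pr {ω | X 0 ω = x 0} * ENNReal.ofReal (∏ i ∈ range n, κ (x i) (x (i + 1))))
    (hκ0 : ∀ y b, 0 ≤ κ y b) {n : ℕ} {Φ : (ℕ → β) → Prop} [DecidablePred Φ]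
    (hΦ : DependsOnPrefix n Φ) :
    Pr {ω | Φ (X · ω)} = ENNReal.ofReal (∑ y : Fin (n + 1) → β with Φ (pathExt n y),
      pathWeight κ (fun s => Pr.real {ω | X 0 ω = s}) n (pathExt n y)) := by
  let cyl : (Fin (n + 1) → β) → Set Ω := fun y => {ω | ∀ i ≤ n, X i ω = pathExt n y i}
  have hcyl : ∀ y, MeasurableSet (cyl y) := fun y => by
    simp only [cyl, Set.ofPred_forall]
    exact .iInter fun i => .iInter fun _ => hX i (measurableSet_singleton _)
  have hunion : {ω | Φ (X · ω)} = ⋃ y ∈ ({y | Φ (pathExt n y)} : Finset _), cyl y := by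
    ext ω
    simp only [Set.mem_ofPred_eq, Set.mem_iUnion, mem_filter, mem_univ, true_and, exists_prop]
    have hagree : ∀ i ≤ n, pathExt n (fun j : Fin (n + 1) => X j ω) i = X i ω :=
      fun i hi => by rw [pathExt_of_le _ hi]
    refine ⟨fun h => ⟨_, (hΦ _ _ hagree).symm ▸ h, fun i hi => (hagree i hi).symm⟩, ?_⟩
    rintro ⟨y, hy, hω⟩
    exact hΦ _ _ (fun i hi => (hω i hi).symm) ▸ hy
  have hdisj : Set.PairwiseDisjoint ↑({y | Φ (pathExt n y)} : Finset _) cyl :=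
    fun y _ y' _ hne => Set.disjoint_left.mpr fun ω hω hω' => hne <| funext fun j => by
      simpa [pathExt_of_le _ (Nat.le_of_lt_succ j.2)] using (hω j (by omega)).symm.trans
        (hω' j (by omega))
  rw [hunion, measure_biUnion_finset hdisj fun y _ => hcyl y,
    ENNReal.ofReal_sum_of_nonneg fun y _ => pathWeight_nonneg hκ0 (fun _ => measureReal_nonneg) _ _]
  refine sum_congr rfl fun y _ => ?_
  rw [hlaw, pathWeight, ENNReal.ofReal_mul measureReal_nonneg, ofReal_measureReal]

lemma sum_measureReal_eq_one [IsProbabilityMeasure Pr] (hX0 : Measurable (X 0)) :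
    ∑ s, Pr.real {ω | X 0 ω = s} = 1 := by
  have h := sum_measureReal_preimage_singleton (μ := Pr) univ fun s _ =>
    hX0 (measurableSet_singleton s)
  rwa [coe_univ, Set.preimage_univ, probReal_univ] at h

lemma ofReal_one_sub_le_measure_iInter [IsProbabilityMeasure Pr] {ι : Type*} [Fintype ι]
    (s : ι → Set Ω) {ε : ℝ} (hε : 0 ≤ ε) (h : ∀ i, Pr (s i)ᶜ ≤ ENNReal.ofReal ε) :
    ENNReal.ofReal (1 - Fintype.card ι * ε) ≤ Pr (⋂ i, s i) := by
  have hcompl : Pr (⋂ i, s i)ᶜ ≤ ENNReal.ofReal (Fintype.card ι * ε) := by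
    rw [Set.compl_iInter, ENNReal.ofReal_mul (Nat.cast_nonneg _), ENNReal.ofReal_natCast,
      ← nsmul_eq_mul, ← card_univ, ← sum_const]
    exact (measure_iUnion_fintype_le Pr _).trans (sum_le_sum fun i _ => h i)
  have hsplit : 1 ≤ Pr (⋂ i, s i) + Pr (⋂ i, s i)ᶜ := by
    rw [← measure_univ (μ := Pr), ← Set.union_compl_self (⋂ i, s i)]
    exact measure_union_le _ _
  rw [ENNReal.ofReal_sub _ (by positivity), ENNReal.ofReal_one]
  exact tsub_le_iff_right.mpr (hsplit.trans (add_le_add_right hcompl _))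

variable [IsProbabilityMeasure Pr] {w : ℕ → (ℕ → β) → ℝ} {Z : β → β → ℝ} {lo : β → ℝ}
  {B σ2 t : ℝ} {ι n : ℕ}

lemma measure_lt_weightedNoise_le (hX : ∀ t, Measurable (X t))
    (hlaw : ∀ (n : ℕ) (x : ℕ → β), Pr {ω | ∀ i ≤ n, X i ω = x i}
      = Pr {ω | X 0 ω = x 0} * ENNReal.ofReal (∏ i ∈ range n, κ (x i) (x (i + 1))))
    (hκ0 : ∀ y b, 0 ≤ κ y b) (hκ1 : ∀ y, ∑ b, κ y b = 1)
    (hw : ∀ e, DependsOnPrefix (ι + e) (w e)) (hwσ : ∀ x, ∑ e ∈ range n, w e x ^ 2 ≤ σ2)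
    (hZ : ∀ y b, Z y b ∈ Set.Icc (lo y) (lo y + B)) (hZm : ∀ y, ∑ b, κ y b * Z y b = 0)
    (hB : 0 < B) (hσ2 : 0 < σ2) (ht : 0 ≤ t) :
    Pr {ω | t < weightedNoise w Z ι n (X · ω)}
      ≤ ENNReal.ofReal (exp (-2 * t ^ 2 / (B ^ 2 * σ2))) := by
  rw [measure_setOf_dependsOnPrefix Pr hX hlaw hκ0 (n := ι + n)
    (Φ := fun x => t < weightedNoise w Z ι n x)
    fun x x' h => congrArg (t < ·) (weightedNoise_dependsOnPrefix hw n x x' h)]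
  exact ENNReal.ofReal_le_ofReal (sum_pathWeight_filter_lt_weightedNoise_le hκ0 hκ1
    (fun _ => measureReal_nonneg) (sum_measureReal_eq_one Pr (hX 0)) hw hwσ hZ hZm hB hσ2 ht)

lemma measure_lt_abs_weightedNoise_le (hX : ∀ t, Measurable (X t))
    (hlaw : ∀ (n : ℕ) (x : ℕ → β), Pr {ω | ∀ i ≤ n, X i ω = x i}
      = Pr {ω | X 0 ω = x 0} * ENNReal.ofReal (∏ i ∈ range n, κ (x i) (x (i + 1))))
    (hκ0 : ∀ y b, 0 ≤ κ y b) (hκ1 : ∀ y, ∑ b, κ y b = 1)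
    (hw : ∀ e, DependsOnPrefix (ι + e) (w e)) (hwσ : ∀ x, ∑ e ∈ range n, w e x ^ 2 ≤ σ2)
    (hZ : ∀ y b, Z y b ∈ Set.Icc (lo y) (lo y + B)) (hZm : ∀ y, ∑ b, κ y b * Z y b = 0)
    (hB : 0 < B) (hσ2 : 0 < σ2) (ht : 0 ≤ t) :
    Pr {ω | t < |weightedNoise w Z ι n (X · ω)|}
      ≤ ENNReal.ofReal (2 * exp (-2 * t ^ 2 / (B ^ 2 * σ2))) := by
  have hw' : ∀ e, DependsOnPrefix (ι + e) fun x => -w e x :=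
    fun e x x' h => congrArg Neg.neg (hw e x x' h)
  calc Pr {ω | t < |weightedNoise w Z ι n (X · ω)|}
      ≤ Pr ({ω | t < weightedNoise w Z ι n (X · ω)}
          ∪ {ω | t < weightedNoise (fun e x => -w e x) Z ι n (X · ω)}) :=
        measure_mono fun ω hω => by simpa [weightedNoise_neg] using lt_abs.mp hω
    _ ≤ ENNReal.ofReal (exp (-2 * t ^ 2 / (B ^ 2 * σ2)))
          + ENNReal.ofReal (exp (-2 * t ^ 2 / (B ^ 2 * σ2))) :=
        (measure_union_le _ _).trans <| add_le_add
          (measure_lt_weightedNoise_le Pr hX hlaw hκ0 hκ1 hw hwσ hZ hZm hB hσ2 ht)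
          (measure_lt_weightedNoise_le Pr hX hlaw hκ0 hκ1 hw' (by simpa using hwσ) hZ hZm hB
            hσ2 ht)
    _ = ENNReal.ofReal (2 * exp (-2 * t ^ 2 / (B ^ 2 * σ2))) := by
        rw [← ENNReal.ofReal_add (exp_pos _).le (exp_pos _).le, two_mul]

end MarkovChain

section Visits

variable {β : Type*} [DecidableEq β] {x : ℕ → β} {ι : ℕ} {sa : β} {η : ℝ}

def visitCount (x : ℕ → β) (ι : ℕ) (sa : β) (d : ℕ) : ℕ := #{e ∈ range d | x (ι + e) = sa}

/-- In the error at `sa` after its `j`-th visit since time `ι`, the noise of the visit at time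
`ι + e` enters with the factor `(1 - η)` once for every later visit among the first `j`. -/
def visitWeight (η : ℝ) (j ι : ℕ) (sa : β) (e : ℕ) (x : ℕ → β) : ℝ :=
  if x (ι + e) = sa ∧ visitCount x ι sa e < j then (1 - η) ^ (j - 1 - visitCount x ι sa e) else 0

@[simp]
lemma visitCount_zero : visitCount x ι sa 0 = 0 := rfl

lemma visitCount_succ (d : ℕ) :
    visitCount x ι sa (d + 1) = visitCount x ι sa d + if x (ι + d) = sa then 1 else 0 := by
  simp only [visitCount, range_add_one, filter_insert]
  split_ifs with h
  · exact card_insert_of_notMem (by simp)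
  · rfl

lemma visitCount_le (d : ℕ) : visitCount x ι sa d ≤ d :=
  (card_filter_le _ _).trans (card_range d).le

lemma visitCount_lt_of_visit {e d : ℕ} (hed : e < d) (hv : x (ι + e) = sa) :
    visitCount x ι sa e < visitCount x ι sa d := by
  have h : visitCount x ι sa (e + 1) ≤ visitCount x ι sa d :=
    card_le_card (filter_subset_filter _ (range_subset_range.mpr hed))
  rw [visitCount_succ, if_pos hv] at h
  omega

lemma visitWeight_dependsOnPrefix (j e : ℕ) :
    DependsOnPrefix (ι + e) (visitWeight η j ι sa e) := fun x x' h => by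
  have hc : visitCount x ι sa e = visitCount x' ι sa e :=
    congrArg card (filter_congr fun e' he' => by rw [h _ (by simp at he'; omega)])
  simp only [visitWeight, hc, h _ le_rfl]

lemma sum_visitWeight_sq (j d : ℕ) :
    ∑ e ∈ range d, visitWeight η j ι sa e x ^ 2
      = ∑ i ∈ range (min (visitCount x ι sa d) j), ((1 - η) ^ 2) ^ (j - 1 - i) := by
  induction d with
  | zero => simp
  | succ d ih =>
    rw [sum_range_succ, ih, visitCount_succ]
    by_cases hv : x (ι + d) = sa
    · by_cases hj : visitCount x ι sa d < j
      · rw [if_pos hv, show min (visitCount x ι sa d + 1) j = min (visitCount x ι sa d) j + 1 by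
          omega, sum_range_succ, min_eq_left hj.le, visitWeight, if_pos ⟨hv, hj⟩, ← pow_mul,
          ← pow_mul, mul_comm]
      · rw [if_pos hv, show min (visitCount x ι sa d + 1) j = min (visitCount x ι sa d) j by
          omega, visitWeight, if_neg (by tauto)]
        simp
    · rw [if_neg hv, visitWeight, if_neg (by tauto)]
      simp

lemma sum_visitWeight_sq_le (hη0 : 0 < η) (hη1 : η ≤ 1) (j d : ℕ) :
    ∑ e ∈ range d, visitWeight η j ι sa e x ^ 2 ≤ 1 / η := by
  have hρ : (1 - η) ^ 2 < 1 := by nlinarith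
  calc ∑ e ∈ range d, visitWeight η j ι sa e x ^ 2
      ≤ ∑ i ∈ range j, ((1 - η) ^ 2) ^ (j - 1 - i) := by
        rw [sum_visitWeight_sq]
        exact sum_le_sum_of_subset_of_nonneg (range_subset_range.mpr (min_le_right _ _))
          fun _ _ _ => by positivity
    _ = ∑ i ∈ Ico 0 j, ((1 - η) ^ 2) ^ i := by
        rw [← range_eq_Ico, sum_range_reflect (fun i => ((1 - η) ^ 2) ^ i) j]
    _ ≤ ((1 - η) ^ 2) ^ 0 / (1 - (1 - η) ^ 2) := geom_sum_Ico_le_of_lt_one (by positivity) hρ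
    _ ≤ 1 / η := by
        rw [pow_zero]
        exact one_div_le_one_div_of_le hη0 (by nlinarith)

variable {Z : β → β → ℝ} {n : ℕ}

lemma weightedNoise_visitWeight_zero :
    weightedNoise (visitWeight η 0 ι sa) Z ι n x = 0 :=
  sum_eq_zero fun e _ => by simp [visitWeight]

lemma weightedNoise_visitWeight_succ {d : ℕ} (hdn : d < n) (hv : x (ι + d) = sa) :
    weightedNoise (visitWeight η (visitCount x ι sa d + 1) ι sa) Z ι n x
      = (1 - η) * weightedNoise (visitWeight η (visitCount x ι sa d) ι sa) Z ι n x
        + Z (x (ι + d)) (x (ι + d + 1)) := by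
  set j := visitCount x ι sa d
  have hterm : ∀ e, visitWeight η (j + 1) ι sa e x
      = (1 - η) * visitWeight η j ι sa e x + if e = d then 1 else 0 := by
    intro e
    rcases lt_trichotomy e d with hed | rfl | hde
    · by_cases hve : x (ι + e) = sa
      · have := visitCount_lt_of_visit hed hve
        rw [visitWeight, visitWeight, if_pos ⟨hve, by omega⟩, if_pos ⟨hve, this⟩, if_neg hed.ne,
          show j + 1 - 1 - visitCount x ι sa e = j - 1 - visitCount x ι sa e + 1 by omega,
          pow_succ]
        ring
      · simp [visitWeight, hve, hed.ne]
    · simp [visitWeight, hv, j]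
    · have hc := visitCount_lt_of_visit hde hv
      simp [visitWeight, hde.ne', show ¬ visitCount x ι sa e < j + 1 by omega,
        show ¬ visitCount x ι sa e < j by omega]
  simp only [weightedNoise, hterm, add_mul, sum_add_distrib, mul_sum, mul_assoc, ite_mul, one_mul,
    zero_mul, sum_ite_eq', mem_range, if_pos hdn]

end Visits

section Bellman

variable {S A : Type*} [Fintype S] [Fintype A] {P : S × A → S → ℝ} {Qstar : S × A → ℝ}

lemma bellman_fixedPoint_mem_Icc [Nonempty S] [Nonempty A] {r : S × A → ℝ} {γ : ℝ}
    (hP0 : ∀ sa s', 0 ≤ P sa s') (hP1 : ∀ sa, ∑ s', P sa s' = 1)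
    (hr : ∀ sa, r sa ∈ Set.Icc (0 : ℝ) 1) (hγ : γ ∈ Set.Ico (0 : ℝ) 1)
    (hQstar : ∀ sa, Qstar sa = r sa + γ * ∑ s', P sa s' * vmax fun a' => Qstar (s', a'))
    (sa : S × A) : Qstar sa ∈ Set.Icc 0 (1 / (1 - γ)) := by
  obtain ⟨hγ0, hγ1⟩ := hγ
  obtain ⟨smax, hmax⟩ := Finite.exists_max Qstar
  obtain ⟨smin, hmin⟩ := Finite.exists_min Qstar
  obtain ⟨a0⟩ := ‹Nonempty A›
  have hup : ∑ s', P smax s' * vmax (fun a' => Qstar (s', a')) ≤ Qstar smax :=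
    (sum_le_sum fun s' _ => mul_le_mul_of_nonneg_left (vmax_le fun _ => hmax _) (hP0 _ _)).trans
      (by rw [← sum_mul, hP1, one_mul])
  have hdown : Qstar smin ≤ ∑ s', P smin s' * vmax (fun a' => Qstar (s', a')) :=
    (by rw [← sum_mul, hP1, one_mul] : Qstar smin = ∑ s', P smin s' * Qstar smin).le.trans
      (sum_le_sum fun s' _ => mul_le_mul_of_nonneg_left
        ((hmin (s', a0)).trans (le_vmax (fun a' => Qstar (s', a')) a0)) (hP0 _ _))
  have hlow : 0 ≤ Qstar smin := by
    have := hQstar smin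
    nlinarith [(hr smin).1]
  have hhigh : Qstar smax * (1 - γ) ≤ 1 := by
    have := hQstar smax
    nlinarith [(hr smax).2]
  refine ⟨hlow.trans (hmin sa), ?_⟩
  rw [le_div_iff₀ (by linarith)]
  nlinarith [hmax sa]

noncomputable def transitionNoise (P : S × A → S → ℝ) (Qstar : S × A → ℝ) (y b : S × A) : ℝ :=
  ∑ s', P y s' * vmax (fun a => Qstar (s', a)) - vmax fun a => Qstar (b.1, a)

lemma transitionNoise_mem_Icc [Nonempty A] {B : ℝ} (hQ : ∀ sa, Qstar sa ∈ Set.Icc 0 B)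
    (y b : S × A) :
    transitionNoise P Qstar y b ∈ Set.Icc (∑ s', P y s' * vmax (fun a => Qstar (s', a)) - B)
      (∑ s', P y s' * vmax (fun a => Qstar (s', a)) - B + B) := by
  obtain ⟨a0⟩ := ‹Nonempty A›
  have hlow := (hQ (b.1, a0)).1.trans (le_vmax (fun a => Qstar (b.1, a)) a0)
  have hhigh := vmax_le fun a => (hQ (b.1, a)).2
  constructor <;> simp only [transitionNoise] <;> linarith

variable {κ : S × A → S × A → ℝ} {pb : S → A → ℝ}

lemma sum_kernel_mul (hκ : ∀ sa sa', κ sa sa' = P sa sa'.1 * pb sa'.1 sa'.2)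
    (hpb1 : ∀ s, ∑ a, pb s a = 1) (y : S × A) (f : S → ℝ) :
    ∑ b, κ y b * f b.1 = ∑ s', P y s' * f s' := by
  simp only [hκ, Fintype.sum_prod_type]
  refine sum_congr rfl fun s' _ => ?_
  rw [← sum_mul, ← mul_sum, hpb1, mul_one]

lemma sum_kernel (hκ : ∀ sa sa', κ sa sa' = P sa sa'.1 * pb sa'.1 sa'.2)
    (hpb1 : ∀ s, ∑ a, pb s a = 1) (hP1 : ∀ sa, ∑ s', P sa s' = 1) (y : S × A) :
    ∑ b, κ y b = 1 := by
  simpa [hP1] using sum_kernel_mul hκ hpb1 y fun _ => 1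

lemma sum_kernel_mul_transitionNoise (hκ : ∀ sa sa', κ sa sa' = P sa sa'.1 * pb sa'.1 sa'.2)
    (hpb1 : ∀ s, ∑ a, pb s a = 1) (hP1 : ∀ sa, ∑ s', P sa s' = 1) (y : S × A) :
    ∑ b, κ y b * transitionNoise P Qstar y b = 0 := by
  have h := sum_kernel_mul hκ hpb1 y fun s' =>
    ∑ s'', P y s'' * vmax (fun a => Qstar (s'', a)) - vmax fun a => Qstar (s', a)
  simp only [transitionNoise, h]
  simp only [mul_sub, sum_sub_distrib, ← sum_mul, hP1, one_mul, sub_self]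

end Bellman

lemma abs_le_add_of_abs_sub_le {Δ m p c a E : ℝ} (hp : 1 / 2 ≤ p) (hp1 : p ≤ 1) (hc1 : c ≤ 1)
    (ha : 0 ≤ a) (hE : 0 ≤ E) (hΔ : |Δ - m| ≤ p * a + (1 - p) * (c * (a + E)))
    (hm : |m| ≤ E / 2) : |Δ| ≤ a + E := by
  have h1 : (1 - p) * (c * (a + E)) ≤ (1 - p) * (a + E) :=
    mul_le_mul_of_nonneg_left (by nlinarith) (by linarith)
  have h2 : (1 - p) * E ≤ E / 2 := by nlinarith
  linarith [abs_sub_abs_le_abs_sub Δ m]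

section LocalSteps

variable {S A : Type*} [Fintype S] [Fintype A] [Nonempty A] [DecidableEq S] [DecidableEq A]
  {P : S × A → S → ℝ} {r : S × A → ℝ} {γ η : ℝ} {Qstar : S × A → ℝ}
  {x : ℕ → S × A} {q : ℕ → S × A → ℝ} {ι n : ℕ} {a E : ℝ}

lemma abs_error_sub_noise_succ_le
    (hQstar : ∀ sa, Qstar sa = r sa + γ * ∑ s', P sa s' * vmax fun a' => Qstar (s', a'))
    (hη0 : 0 ≤ η) (hη1 : η ≤ 1) (hγ0 : 0 ≤ γ) {d : ℕ} (hdn : d < n) (sa : S × A)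
    (hstep : q (ι + d + 1) sa = if sa = x (ι + d) then
      (1 - η) * q (ι + d) sa + η * (r sa + γ * vmax fun a' => q (ι + d) ((x (ι + d + 1)).1, a'))
      else q (ι + d) sa)
    (hnorm : ∀ sa, |Qstar sa - q (ι + d) sa| ≤ a + E)
    (h : |Qstar sa - q (ι + d) sa - γ * η * weightedNoise
        (visitWeight η (visitCount x ι sa d) ι sa) (transitionNoise P Qstar) ι n x|
      ≤ (1 - η) ^ visitCount x ι sa d * a
        + (1 - (1 - η) ^ visitCount x ι sa d) * (γ * (a + E))) :
    |Qstar sa - q (ι + d + 1) sa - γ * η * weightedNoise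
        (visitWeight η (visitCount x ι sa (d + 1)) ι sa) (transitionNoise P Qstar) ι n x|
      ≤ (1 - η) ^ visitCount x ι sa (d + 1) * a
        + (1 - (1 - η) ^ visitCount x ι sa (d + 1)) * (γ * (a + E)) := by
  by_cases hv : sa = x (ι + d)
  · rw [visitCount_succ, if_pos hv.symm, weightedNoise_visitWeight_succ hdn hv.symm, hstep,
      if_pos hv]
    set s' := (x (ι + d + 1)).1
    have hbootstrap : |(vmax fun a' => Qstar (s', a')) - vmax fun a' => q (ι + d) (s', a')|
        ≤ a + E := abs_vmax_sub_vmax_le fun a' => hnorm (s', a')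
    have hsplit : Qstar sa - ((1 - η) * q (ι + d) sa
          + η * (r sa + γ * vmax fun a' => q (ι + d) (s', a')))
        - γ * η * ((1 - η) * weightedNoise (visitWeight η (visitCount x ι sa d) ι sa)
          (transitionNoise P Qstar) ι n x + transitionNoise P Qstar (x (ι + d)) (x (ι + d + 1)))
        = (1 - η) * (Qstar sa - q (ι + d) sa - γ * η * weightedNoise
            (visitWeight η (visitCount x ι sa d) ι sa) (transitionNoise P Qstar) ι n x)
          + η * γ * ((vmax fun a' => Qstar (s', a')) - vmax fun a' => q (ι + d) (s', a')) := by
      rw [hQstar sa, transitionNoise, ← hv]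
      ring
    rw [hsplit]
    calc _ ≤ (1 - η) * |Qstar sa - q (ι + d) sa - γ * η * weightedNoise
            (visitWeight η (visitCount x ι sa d) ι sa) (transitionNoise P Qstar) ι n x|
          + η * γ * |(vmax fun a' => Qstar (s', a')) - vmax fun a' => q (ι + d) (s', a')| := by
          refine (abs_add_le _ _).trans_eq ?_
          rw [abs_mul, abs_mul, abs_of_nonneg (show 0 ≤ 1 - η by linarith),
            abs_of_nonneg (show 0 ≤ η * γ by positivity)]
      _ ≤ (1 - η) * ((1 - η) ^ visitCount x ι sa d * a
            + (1 - (1 - η) ^ visitCount x ι sa d) * (γ * (a + E))) + η * γ * (a + E) := by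
          gcongr
      _ = _ := by ring
  · rwa [visitCount_succ, if_neg fun h => hv h.symm, add_zero, hstep, if_neg hv]

theorem abs_sub_le_supNorm_add_of_localSteps
    (hQstar : ∀ sa, Qstar sa = r sa + γ * ∑ s', P sa s' * vmax fun a' => Qstar (s', a'))
    (hη0 : 0 ≤ η) (hη1 : η ≤ 1) (hγ0 : 0 ≤ γ) (hγ1 : γ ≤ 1) {D : ℕ} (hDn : D ≤ n)
    (hηD : η * D ≤ 1 / 2)
    (hstep : ∀ d < D, ∀ sa, q (ι + d + 1) sa = if sa = x (ι + d) then
      (1 - η) * q (ι + d) sa + η * (r sa + γ * vmax fun a' => q (ι + d) ((x (ι + d + 1)).1, a'))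
      else q (ι + d) sa)
    (hnoise : ∀ sa, ∀ j ≤ D, γ * η * |weightedNoise (visitWeight η j ι sa)
      (transitionNoise P Qstar) ι n x| ≤ E / 2) (sa : S × A) :
    |Qstar sa - q (ι + D) sa| ≤ supNorm (fun sa => Qstar sa - q ι sa) + E := by
  set a := supNorm fun sa => Qstar sa - q ι sa
  have close : ∀ d ≤ D, ∀ sa, |Qstar sa - q (ι + d) sa - γ * η * weightedNoise
        (visitWeight η (visitCount x ι sa d) ι sa) (transitionNoise P Qstar) ι n x|
      ≤ (1 - η) ^ visitCount x ι sa d * a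
        + (1 - (1 - η) ^ visitCount x ι sa d) * (γ * (a + E)) →
      |Qstar sa - q (ι + d) sa| ≤ a + E := by
    intro d hd sa h
    have hc : visitCount x ι sa d ≤ D := (visitCount_le d).trans hd
    have hcη : (visitCount x ι sa d : ℝ) * η ≤ 1 / 2 := by
      nlinarith [(Nat.cast_le (α := ℝ)).mpr hc]
    have hbernoulli := one_add_mul_le_pow (a := -η) (by linarith) (visitCount x ι sa d)
    rw [← sub_eq_add_neg] at hbernoulli
    have hE : 0 ≤ E := by
      nlinarith [hnoise sa 0 (Nat.zero_le _), mul_nonneg (mul_nonneg hγ0 hη0) (abs_nonneg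
        (weightedNoise (visitWeight η 0 ι sa) (transitionNoise P Qstar) ι n x))]
    refine abs_le_add_of_abs_sub_le (by linarith) (pow_le_one₀ (by linarith) (by linarith)) hγ1
      (supNorm_nonneg _) hE h ?_
    rw [abs_mul, abs_of_nonneg (by positivity)]
    exact hnoise sa _ hc
  have invariant : ∀ d ≤ D, ∀ sa, |Qstar sa - q (ι + d) sa - γ * η * weightedNoise
        (visitWeight η (visitCount x ι sa d) ι sa) (transitionNoise P Qstar) ι n x|
      ≤ (1 - η) ^ visitCount x ι sa d * a
        + (1 - (1 - η) ^ visitCount x ι sa d) * (γ * (a + E)) := by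
    intro d
    induction d with
    | zero =>
      intro _ sa
      simpa [weightedNoise_visitWeight_zero] using abs_le_supNorm (fun sa => Qstar sa - q ι sa) sa
    | succ d ih =>
      intro hd sa
      exact abs_error_sub_noise_succ_le hQstar hη0 hη1 hγ0 (by omega) sa (hstep d hd sa)
        (fun sa => close d (by omega) sa (ih (by omega) sa)) (ih (by omega) sa)
  exact close D le_rfl sa (invariant D le_rfl sa)

theorem supNorm_sub_le_supNorm_sub_lastSync_add [Nonempty S]
    (hQstar : ∀ sa, Qstar sa = r sa + γ * ∑ s', P sa s' * vmax fun a' => Qstar (s', a'))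
    (hη0 : 0 ≤ η) (hη1 : η ≤ 1) (hγ0 : 0 ≤ γ) (hγ1 : γ ≤ 1) {τ : ℕ} (hτ : 0 < τ)
    (hητ : η * τ ≤ 1 / 2) {Qhalf : ℕ → S × A → ℝ}
    (hupd : ∀ t sa, Qhalf (t + 1) sa = if sa = x t then
      (1 - η) * q t sa + η * (r sa + γ * vmax fun a' => q t ((x (t + 1)).1, a')) else q t sa)
    (hlocal : ∀ t sa, ¬ τ ∣ t + 1 → q (t + 1) sa = Qhalf (t + 1) sa) (u : ℕ)
    (hnoise : ∀ sa, ∀ j < τ, γ * η * |weightedNoise (visitWeight η j (τ * (u / τ)) sa)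
      (transitionNoise P Qstar) (τ * (u / τ)) τ x| ≤ E / 2) :
    supNorm (fun sa => Qstar sa - q u sa)
      ≤ supNorm (fun sa => Qstar sa - q (τ * (u / τ)) sa) + E := by
  have hD := Nat.mod_lt u hτ
  have hstep : ∀ d < u % τ, ∀ sa, q (τ * (u / τ) + d + 1) sa
      = if sa = x (τ * (u / τ) + d) then (1 - η) * q (τ * (u / τ) + d) sa
        + η * (r sa + γ * vmax fun a' => q (τ * (u / τ) + d) ((x (τ * (u / τ) + d + 1)).1, a'))
        else q (τ * (u / τ) + d) sa := fun d hd sa => by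
    rw [hlocal _ _ fun hdvd => ?_, hupd]
    rw [add_assoc] at hdvd
    have := Nat.le_of_dvd (by omega) ((Nat.dvd_add_right (Nat.dvd_mul_right τ _)).mp hdvd)
    omega
  have hηD : η * (u % τ : ℕ) ≤ 1 / 2 :=
    (mul_le_mul_of_nonneg_left (by exact_mod_cast hD.le) hη0).trans hητ
  refine supNorm_le fun sa => ?_
  have h := abs_sub_le_supNorm_add_of_localSteps hQstar hη0 hη1 hγ0 hγ1 hD.le hηD hstep
    (fun sa j hj => hnoise sa j (by omega)) sa
  rwa [Nat.div_add_mod] at h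

end LocalSteps

lemma ofReal_le_measure_forall_mul_abs_weightedNoise_visitWeight_le {Ω : Type*} [MeasurableSpace Ω]
    (Pr : Measure Ω) [IsProbabilityMeasure Pr] {β : Type*} [Fintype β] [DecidableEq β]
    [MeasurableSpace β] [MeasurableSingletonClass β] {K : ℕ} {X : Fin K → ℕ → Ω → β}
    {κ : Fin K → β → β → ℝ} (hX : ∀ k t, Measurable (X k t))
    (hlaw : ∀ (k : Fin K) (n : ℕ) (x : ℕ → β), Pr {ω | ∀ i ≤ n, X k i ω = x i}
      = Pr {ω | X k 0 ω = x 0} * ENNReal.ofReal (∏ i ∈ range n, κ k (x i) (x (i + 1))))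
    (hκ0 : ∀ k y b, 0 ≤ κ k y b) (hκ1 : ∀ k y, ∑ b, κ k y b = 1)
    {Z : β → β → ℝ} {lo : β → ℝ} {B : ℝ} (hB : 0 < B)
    (hZ : ∀ y b, Z y b ∈ Set.Icc (lo y) (lo y + B)) (hZm : ∀ k y, ∑ b, κ k y b * Z y b = 0)
    {η : ℝ} (hη0 : 0 < η) (hη1 : η ≤ 1) (m τ : ℕ) {L : ℝ} (hL : 0 ≤ L) :
    ENNReal.ofReal (1 - K * m * Fintype.card β * τ * (2 * exp (-2 * L)))
      ≤ Pr {ω | ∀ k, ∀ q < m, ∀ sa, ∀ j < τ,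
          η * |weightedNoise (visitWeight η j (τ * q) sa) Z (τ * q) τ (X k · ω)|
            ≤ B * √(η * L)} := by
  set t := B * √(η * L) / η
  have hexp : -2 * t ^ 2 / (B ^ 2 * (1 / η)) = -2 * L := by
    simp only [t]
    rw [div_pow, mul_pow, sq_sqrt (by positivity)]
    field_simp
  have h := ofReal_one_sub_le_measure_iInter Pr (fun i : Fin K × Fin m × β × Fin τ =>
      {ω | |weightedNoise (visitWeight η i.2.2.2 (τ * i.2.1) i.2.2.1) Z (τ * i.2.1) τ
        (X i.1 · ω)| ≤ t}) (ε := 2 * exp (-2 * L)) (by positivity) fun i => by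
    simp only [Set.compl_ofPred, not_le]
    rw [← hexp]
    exact measure_lt_abs_weightedNoise_le Pr (hX i.1) (hlaw i.1) (hκ0 i.1) (hκ1 i.1)
      (fun e => visitWeight_dependsOnPrefix _ e) (fun _ => sum_visitWeight_sq_le hη0 hη1 _ _)
      hZ (hZm i.1) hB (one_div_pos.mpr hη0) (by positivity)
  simp only [Fintype.card_prod, Fintype.card_fin, Nat.cast_mul] at h
  refine le_of_eq_of_le (by ring_nf) (h.trans (measure_mono fun ω hω k q hq sa j hj => ?_))
  exact (le_div_iff₀' hη0).mp (Set.mem_iInter.mp hω ⟨k, ⟨q, hq⟩, sa, ⟨j, hj⟩⟩)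

lemma two_le_card_mul_card_mul_mul (S A : Type*) [Fintype S] [Fintype A] [Nonempty S]
    [Nonempty A] {K T τ : ℕ} (hK : 0 < K) (hT : 0 < T) (hτ : 2 ≤ τ) (hτT : τ ∣ T) :
    (2 : ℝ) ≤ (Fintype.card S) * (Fintype.card A) * T * K := by
  have hSA := Nat.mul_pos (Fintype.card_pos (α := S)) (Fintype.card_pos (α := A))
  exact_mod_cast (hτ.trans (Nat.le_of_dvd hT hτT)).trans <|
    (Nat.le_mul_of_pos_left T hSA).trans (Nat.le_mul_of_pos_right _ hK)

lemma ofReal_one_sub_le_ofReal_one_sub_unionBound (S A : Type*) [Fintype S] [Fintype A]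
    [Nonempty S] [Nonempty A] {K T τ : ℕ} (hK : 0 < K) (hT : 0 < T) (hτ : 2 ≤ τ) (hτT : τ ∣ T)
    {δ : ℝ} (hδ0 : 0 < δ) (hδ1 : δ < 1) :
    ENNReal.ofReal (1 - δ) ≤ ENNReal.ofReal (1 - K * (T / τ : ℕ) * Fintype.card (S × A) * τ
      * (2 * exp (-2 * log ((Fintype.card S) * (Fintype.card A) * T * K / δ)))) := by
  have hN := two_le_card_mul_card_mul_mul S A hK hT hτ hτT
  set N : ℝ := (Fintype.card S) * (Fintype.card A) * T * K
  have hcard : (K : ℝ) * (T / τ : ℕ) * Fintype.card (S × A) * τ = N := by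
    have hdiv : ((T / τ : ℕ) : ℝ) * τ = T := by exact_mod_cast Nat.div_mul_cancel hτT
    rw [Fintype.card_prod, Nat.cast_mul]
    linear_combination (K * (Fintype.card S : ℝ) * Fintype.card A) * hdiv
  have hC : 0 < N / δ := by positivity
  rw [hcard, show -2 * log (N / δ) = -(log (N / δ) + log (N / δ)) by ring, exp_neg, exp_add,
    exp_log hC]
  refine ENNReal.ofReal_le_ofReal (sub_le_sub_left ?_ 1)
  field_simp
  nlinarith

theorem fedAsynQ_local_error_growth_bound_general
    {S A : Type*} [Fintype S] [Fintype A] [Nonempty S] [Nonempty A]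
    [DecidableEq S] [DecidableEq A]
    [MeasurableSpace S] [MeasurableSingletonClass S]
    [MeasurableSpace A] [MeasurableSingletonClass A]
    {Ω : Type*} [MeasurableSpace Ω] (Pr : Measure Ω) [IsProbabilityMeasure Pr]
    -- the MDP
    (P : S × A → S → ℝ) (r : S × A → ℝ) (γ : ℝ)
    (hP0 : ∀ sa s', 0 ≤ P sa s') (hP1 : ∀ sa, ∑ s', P sa s' = 1)
    (hr : ∀ sa, r sa ∈ Set.Icc (0 : ℝ) 1) (hγ : γ ∈ Set.Ico (0 : ℝ) 1)
    -- the optimal Q-function (Bellman fixed point)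
    (Qstar : S × A → ℝ)
    (hQstar : ∀ sa, Qstar sa
        = r sa + γ * ∑ s', P sa s' * vmax fun a' => Qstar (s', a'))
    -- algorithm parameters
    (K : ℕ) (hK : 0 < K) (T τ : ℕ) (hT : 0 < T) (hτ : 0 < τ) (hτT : τ ∣ T)
    (η : ℝ) (hη0 : 0 < η) (hη1 : η < 1)
    (δ : ℝ) (hδ : δ ∈ Set.Ioo (0 : ℝ) 1)
    -- behavior policies and the induced Markov chains on `S × A`
    (πb : Fin K → S → A → ℝ)
    (hπb0 : ∀ k s a, 0 ≤ πb k s a) (hπb1 : ∀ k s, ∑ a, πb k s a = 1)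
    (κ : Fin K → S × A → S × A → ℝ)
    (hκ : ∀ k sa sa', κ k sa sa' = P sa sa'.1 * πb k sa'.1 sa'.2)
    -- the Markovian trajectories of the agents
    (traj : Fin K → ℕ → Ω → S × A)
    (htraj_meas : ∀ k t, Measurable (traj k t))
    (hMarkov : ∀ (k : Fin K) (n : ℕ) (x : ℕ → S × A),
      Pr {ω | ∀ i ≤ n, traj k i ω = x i}
        = Pr {ω | traj k 0 ω = x 0}
            * ENNReal.ofReal (∏ i ∈ Finset.range n, κ k (x i) (x (i + 1))))
    -- the iterates of FedAsynQ with arbitrary nonnegative aggregation weights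
    (α : ℕ → Fin K → S × A → Ω → ℝ)
    (Q Qhalf : ℕ → Fin K → S × A → Ω → ℝ)
    (hupd : ∀ t k sa ω, Qhalf (t + 1) k sa ω
        = if sa = traj k t ω then
            (1 - η) * Q t k sa ω
              + η * (r sa + γ * vmax fun a' => Q t k ((traj k (t + 1) ω).1, a') ω)
          else Q t k sa ω)
    (havg : ∀ t k sa ω, Q (t + 1) k sa ω
        = if τ ∣ (t + 1) then
            ∑ k' : Fin K, α (t + 1) k' sa ω * Qhalf (t + 1) k' sa ω
          else Qhalf (t + 1) k sa ω)
    -- the learning rate condition `ητ ≤ 1/2`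
    (hητ : η * τ ≤ 1 / 2) :
    Pr {ω | ∀ k : Fin K, ∀ u < T,
          supNorm (fun sa : S × A => Qstar sa - Q u k sa ω)
            ≤ supNorm (fun sa : S × A => Qstar sa - Q (τ * (u / τ)) k sa ω)
              + 2 * γ / (1 - γ)
                * Real.sqrt (η
                    * Real.log ((Fintype.card S) * (Fintype.card A) * T * K / δ))}
      ≥ ENNReal.ofReal (1 - δ) := by
  obtain ⟨hγ0, hγ1⟩ := hγ
  obtain ⟨hδ0, hδ1⟩ := hδ
  set C : ℝ := (Fintype.card S) * (Fintype.card A) * T * K / δ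
  have hγ' : 0 < 1 - γ := by linarith
  -- For `τ = 1` every iterate is a synchronization; otherwise `T ≥ τ ≥ 2`, which the union
  -- bound needs.
  rcases eq_or_ne τ 1 with rfl | hτ1
  · simp only [one_mul, Nat.div_one, le_add_iff_nonneg_right, implies_true, Set.ofPred_true,
      measure_univ, ge_iff_le, ENNReal.ofReal_le_one, show 0 ≤ 2 * γ / (1 - γ) * √(η * log C)
        by positivity]
    linarith
  have hN := two_le_card_mul_card_mul_mul S A hK hT (by omega) hτT
  have hgood := ofReal_le_measure_forall_mul_abs_weightedNoise_visitWeight_le Pr htraj_meas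
    hMarkov (fun k y b => by rw [hκ]; exact mul_nonneg (hP0 _ _) (hπb0 _ _ _))
    (fun k => sum_kernel (hκ k) (hπb1 k) hP1) (one_div_pos.mpr hγ')
    (transitionNoise_mem_Icc (bellman_fixedPoint_mem_Icc hP0 hP1 hr ⟨hγ0, hγ1⟩ hQstar))
    (fun k => sum_kernel_mul_transitionNoise (hκ k) (hπb1 k) hP1) hη0 hη1.le (T / τ) τ
    (log_nonneg ((one_le_div hδ0).mpr (by linarith)) : 0 ≤ log C)
  refine ((ofReal_one_sub_le_ofReal_one_sub_unionBound S A hK hT (by omega) hτT hδ0 hδ1).trans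
    hgood).trans (measure_mono fun ω hω k u hu => ?_)
  refine supNorm_sub_le_supNorm_sub_lastSync_add (x := (traj k · ω)) (q := (Q · k · ω))
    (Qhalf := (Qhalf · k · ω)) hQstar hη0.le hη1.le hγ0 hγ1.le hτ hητ (hupd · k · ω)
    (fun t sa h => (havg t k sa ω).trans (if_neg h)) u fun sa j hj => ?_
  rw [mul_assoc]
  refine (mul_le_mul_of_nonneg_left (hω k _ (Nat.div_lt_div_of_lt_of_dvd hτT hu) sa j hj)
    hγ0).trans_eq ?_
  field_simp

/-- local error growth bound for asynchronous local updates.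
If `ητ ≤ 1/2`, then with probability at least `1-δ`, simultaneously for all agents `k`
and all `0 ≤ u < T`,
`‖Δ_u^k‖_∞ ≤ ‖Δ_{ι(u)}^k‖_∞ + (2γ/(1-γ)) √(η log(|S||A|TK/δ))`, where
`Δ_v^k = Q* − Q_v^k` and `ι(u) = τ⌊u/τ⌋`. -/
theorem fedAsynQ_local_error_growth_bound
    {S A : Type*} [Fintype S] [Fintype A] [Nonempty S] [Nonempty A]
    [DecidableEq S] [DecidableEq A]
    [MeasurableSpace S] [MeasurableSingletonClass S]
    [MeasurableSpace A] [MeasurableSingletonClass A]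
    {Ω : Type*} [MeasurableSpace Ω] (Pr : Measure Ω) [IsProbabilityMeasure Pr]
    -- the MDP
    (P : S × A → S → ℝ) (r : S × A → ℝ) (γ : ℝ)
    (hP0 : ∀ sa s', 0 ≤ P sa s') (hP1 : ∀ sa, ∑ s', P sa s' = 1)
    (hr : ∀ sa, r sa ∈ Set.Icc (0 : ℝ) 1) (hγ : γ ∈ Set.Ico (0 : ℝ) 1)
    -- the optimal Q-function (Bellman fixed point)
    (Qstar : S × A → ℝ)
    (hQstar : ∀ sa, Qstar sa
        = r sa + γ * ∑ s', P sa s' * vmax fun a' => Qstar (s', a'))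
    -- algorithm parameters
    (K : ℕ) (hK : 0 < K) (T τ : ℕ) (hT : 0 < T) (hτ : 0 < τ) (hτT : τ ∣ T)
    (η : ℝ) (hη0 : 0 < η) (hη1 : η < 1)
    (δ : ℝ) (hδ : δ ∈ Set.Ioo (0 : ℝ) 1)
    -- behavior policies and the induced Markov chains on `S × A`
    (πb : Fin K → S → A → ℝ)
    (hπb0 : ∀ k s a, 0 ≤ πb k s a) (hπb1 : ∀ k s, ∑ a, πb k s a = 1)
    (κ : Fin K → S × A → S × A → ℝ)
    (hκ : ∀ k sa sa', κ k sa sa' = P sa sa'.1 * πb k sa'.1 sa'.2)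
    -- the Markovian trajectories of the agents
    (traj : Fin K → ℕ → Ω → S × A)
    (htraj_meas : ∀ k t, Measurable (traj k t))
    (hMarkov : ∀ (k : Fin K) (n : ℕ) (x : ℕ → S × A),
      Pr {ω | ∀ i ≤ n, traj k i ω = x i}
        = Pr {ω | traj k 0 ω = x 0}
            * ENNReal.ofReal (∏ i ∈ Finset.range n, κ k (x i) (x (i + 1))))
    (hindep : iIndepFun (fun (k : Fin K) ω t => traj k t ω) Pr)
    -- the iterates of FedAsynQ with arbitrary nonnegative aggregation weights
    (α : ℕ → Fin K → S × A → Ω → ℝ)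
    (hα0 : ∀ t k sa ω, 0 ≤ α t k sa ω)
    (hα1 : ∀ t sa ω, ∑ k : Fin K, α t k sa ω = 1)
    (Q0 : S × A → ℝ) (hQ0 : ∀ sa, Q0 sa ∈ Set.Icc (0 : ℝ) (1 / (1 - γ)))
    (Q Qhalf : ℕ → Fin K → S × A → Ω → ℝ)
    (hinit : ∀ k sa ω, Q 0 k sa ω = Q0 sa)
    (hupd : ∀ t k sa ω, Qhalf (t + 1) k sa ω
        = if sa = traj k t ω then
            (1 - η) * Q t k sa ω
              + η * (r sa + γ * vmax fun a' => Q t k ((traj k (t + 1) ω).1, a') ω)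
          else Q t k sa ω)
    (havg : ∀ t k sa ω, Q (t + 1) k sa ω
        = if τ ∣ (t + 1) then
            ∑ k' : Fin K, α (t + 1) k' sa ω * Qhalf (t + 1) k' sa ω
          else Qhalf (t + 1) k sa ω)
    -- the learning rate condition `ητ ≤ 1/2`
    (hητ : η * τ ≤ 1 / 2) :
    Pr {ω | ∀ k : Fin K, ∀ u < T,
          supNorm (fun sa : S × A => Qstar sa - Q u k sa ω)
            ≤ supNorm (fun sa : S × A => Qstar sa - Q (τ * (u / τ)) k sa ω)
              + 2 * γ / (1 - γ)
                * Real.sqrt (η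
                    * Real.log ((Fintype.card S) * (Fintype.card A) * T * K / δ))}
      ≥ ENNReal.ofReal (1 - δ) :=
  fedAsynQ_local_error_growth_bound_general Pr P r γ hP0 hP1 hr hγ Qstar hQstar K hK T τ hT hτ hτT η
    hη0 hη1 δ hδ πb hπb0 hπb1 κ hκ traj htraj_meas hMarkov α Q Qhalf hupd havg hητ
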